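/- Let α ∈ (1,∞) and λ ∈ [0,1]. Let ρ₀, ρ₁ be positive semidefinite complex matrices and σ₀, σ₁ positive definite complex matrices, all of the same size. Then Q^#_α( (1−λ)ρ₀ + λρ₁ ‖ (1−λ)σ₀ + λσ₁ ) ≤ (1−λ) Q^#_α(ρ₀‖σ₀) + λ Q^#_α(ρ₁‖σ₁), i.e., Q^#_α is jointly convex. -/

import Mathlib

open Matrix Filter
open scoped Kronecker Classical ComplexOrder

noncomputable def Matrix.rpowH {n : Type*} [Fintype n] [DecidableEq n]
    (A : Matrix n n ℂ) (r : ℝ) : Matrix n n ℂ :=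
  if hA : A.IsHermitian then
    (hA.eigenvectorUnitary : Matrix n n ℂ) *
      Matrix.diagonal (fun i => ((hA.eigenvalues i ^ r : ℝ) : ℂ)) *
      star (hA.eigenvectorUnitary : Matrix n n ℂ)
  else 0

noncomputable def Matrix.gmean {n : Type*} [Fintype n] [DecidableEq n]
    (β : ℝ) (S A : Matrix n n ℂ) : Matrix n n ℂ :=
  S.rpowH (1/2) * ((S.rpowH (-(1/2)) * A * S.rpowH (-(1/2))).rpowH β) * S.rpowH (1/2)

noncomputable def QSharp {n : Type*} [Fintype n] [DecidableEq n]
    (α : ℝ) (ρ σ : Matrix n n ℂ) : ℝ :=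
  sInf { t : ℝ | ∃ A : Matrix n n ℂ, A.PosSemidef ∧
    (Matrix.gmean (1/α) σ A - ρ).PosSemidef ∧ t = A.trace.re }

noncomputable def DSharp {n : Type*} [Fintype n] [DecidableEq n]
    (α : ℝ) (ρ σ : Matrix n n ℂ) : ℝ :=
  1/(α-1) * Real.logb 2 (QSharp α ρ σ)

noncomputable def opNorm {n : Type*} [Fintype n] [DecidableEq n] (A : Matrix n n ℂ) : ℝ :=
  ‖(Matrix.toEuclideanCLM (𝕜 := ℂ) A : EuclideanSpace ℂ n →L[ℂ] EuclideanSpace ℂ n)‖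

noncomputable def Dtilde {n : Type*} [Fintype n] [DecidableEq n]
    (α : ℝ) (ρ σ : Matrix n n ℂ) : ℝ :=
  1/(α-1) * Real.logb 2
    (((σ.rpowH ((1-α)/(2*α)) * ρ * σ.rpowH ((1-α)/(2*α))).rpowH α).trace.re)

noncomputable def Dhat {n : Type*} [Fintype n] [DecidableEq n]
    (α : ℝ) (ρ σ : Matrix n n ℂ) : ℝ :=
  1/(α-1) * Real.logb 2
    ((σ.rpowH (1/2) * ((σ.rpowH (-(1/2)) * ρ * σ.rpowH (-(1/2))).rpowH α) * σ.rpowH (1/2)).trace.re)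

/-!
Write `S = T Tᴴ` and `A = T D Tᴴ` with `T` invertible and `D ≥ 0` diagonal; then
`S #_β A = T D^β Tᴴ`. The scalar representation `d^β = C⁻¹ ∫₀^∞ t^(β-1) d/(t+d) dt` turns the
quadratic form of `S #_β A` into an integral of the quadratic forms of the parallel sums
`t⁻¹A : S`, since `d/(t+d)` is the parallel sum of `d/t` and `1`. By the variational formula
`⟪x, (A : B) x⟫ = inf_u ⟪u, A u⟫ + ⟪x - u, B (x - u)⟫` these are infima of functions linear in
`(A, B)`, hence jointly concave, and so is `(S, A) ↦ S #_β A`. Consequently the convex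
combination of feasible points `A₀`, `A₁` for `(ρ₀, σ₀)`, `(ρ₁, σ₁)` is feasible for the combined
pair, and taking infima gives joint convexity of `Q^#_α`.
-/

open MeasureTheory Set
open scoped Pointwise

lemma Complex.mul_normSq_div_le {a : ℝ} (ha : 0 ≤ a) (y v : ℂ) :
    a * normSq y / (1 + a) ≤ a * normSq v + normSq (y - v) := by
  rw [div_le_iff₀ (by positivity)]
  simp only [normSq_apply, sub_re, sub_im]
  nlinarith [sq_nonneg ((1 + a) * v.re - y.re), sq_nonneg ((1 + a) * v.im - y.im)]

lemma Complex.mul_normSq_div_eq {a : ℝ} (ha : 0 ≤ a) (y : ℂ) :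
    a * normSq y / (1 + a) =
      a * normSq ((1 + a : ℂ)⁻¹ * y) + normSq (y - (1 + a : ℂ)⁻¹ * y) := by
  have h : (1 + a : ℂ) ≠ 0 := by exact_mod_cast (by positivity : (1 + a) ≠ 0)
  rw [show y - (1 + a : ℂ)⁻¹ * y = a * ((1 + a : ℂ)⁻¹ * y) by field_simp; ring]
  have h1a : (1 + a : ℂ) = ((1 + a : ℝ) : ℂ) := by push_cast; rfl
  simp only [map_mul, map_inv₀, h1a, normSq_ofReal]
  field_simp

namespace Matrix

lemma PosDef.smul_add_smul {n : Type*} {a b : ℝ} (ha : 0 ≤ a) (hb : 0 ≤ b) (hab : 0 < a + b)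
    {A B : Matrix n n ℂ} (hA : A.PosDef) (hB : B.PosDef) : (a • A + b • B).PosDef := by
  rcases ha.eq_or_lt with rfl | ha
  · simpa using hB.smul (by simpa using hab)
  · exact (hA.smul ha).add_posSemidef (hB.posSemidef.smul hb)

variable {n : Type*} [Fintype n]

def hermForm (M : Matrix n n ℂ) (x : n → ℂ) : ℝ := (star x ⬝ᵥ M *ᵥ x).re

@[simp] lemma hermForm_add (M N : Matrix n n ℂ) (x : n → ℂ) :
    hermForm (M + N) x = hermForm M x + hermForm N x := by
  simp [hermForm, add_mulVec]

@[simp] lemma hermForm_sub (M N : Matrix n n ℂ) (x : n → ℂ) :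
    hermForm (M - N) x = hermForm M x - hermForm N x := by
  simp [hermForm, sub_mulVec]

@[simp] lemma hermForm_smul (c : ℝ) (M : Matrix n n ℂ) (x : n → ℂ) :
    hermForm (c • M) x = c * hermForm M x := by
  simp [hermForm, smul_mulVec, Complex.real_smul]

lemma PosSemidef.hermForm_nonneg {M : Matrix n n ℂ} (hM : M.PosSemidef) (x : n → ℂ) :
    0 ≤ hermForm M x :=
  hM.re_dotProduct_nonneg x

lemma IsHermitian.posSemidef_of_hermForm_nonneg {M : Matrix n n ℂ} (hM : M.IsHermitian)
    (h : ∀ x, 0 ≤ hermForm M x) : M.PosSemidef :=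
  .of_dotProduct_mulVec_nonneg hM fun x =>
    RCLike.nonneg_iff.mpr ⟨h x, hM.im_star_dotProduct_mulVec_self x⟩

lemma hermForm_mul_diagonal_mul_conjTranspose [DecidableEq n] (T : Matrix n n ℂ) (a : n → ℝ)
    (x : n → ℂ) :
    hermForm (T * diagonal (fun i => (a i : ℂ)) * Tᴴ) x =
      ∑ i, a i * Complex.normSq ((Tᴴ *ᵥ x) i) := by
  have : star x ⬝ᵥ (T * diagonal (fun i => (a i : ℂ)) * Tᴴ) *ᵥ x =
      star (Tᴴ *ᵥ x) ⬝ᵥ diagonal (fun i => (a i : ℂ)) *ᵥ (Tᴴ *ᵥ x) := by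
    rw [← mulVec_mulVec, ← mulVec_mulVec, dotProduct_mulVec, star_mulVec,
      conjTranspose_conjTranspose, ← dotProduct_mulVec]
  rw [hermForm, this]
  simp only [dotProduct, mulVec_diagonal, Complex.re_sum]
  refine Finset.sum_congr rfl fun i _ => ?_
  rw [Pi.star_apply, mul_left_comm, Complex.star_def, ← Complex.normSq_eq_conj_mul_self,
    ← Complex.ofReal_mul, Complex.ofReal_re]

/-- The quadratic form `x ↦ ⟪x, (A : B) x⟫` of the parallel sum `A : B = (A⁻¹ + B⁻¹)⁻¹`, through
its variational formula, which makes sense for all `A`, `B`. -/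
noncomputable def parallelSumForm (A B : Matrix n n ℂ) (x : n → ℂ) : ℝ :=
  ⨅ u, hermForm A u + hermForm B (x - u)

lemma bddBelow_parallelSumForm {A B : Matrix n n ℂ} (hA : A.PosSemidef) (hB : B.PosSemidef)
    (x : n → ℂ) : BddBelow (range fun u => hermForm A u + hermForm B (x - u)) :=
  ⟨0, by rintro _ ⟨u, rfl⟩; exact add_nonneg (hA.hermForm_nonneg u) (hB.hermForm_nonneg _)⟩

theorem smul_parallelSumForm_add_smul_le {a b : ℝ} (ha : 0 ≤ a) (hb : 0 ≤ b)
    {A₀ B₀ A₁ B₁ : Matrix n n ℂ} (hA₀ : A₀.PosSemidef) (hB₀ : B₀.PosSemidef)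
    (hA₁ : A₁.PosSemidef) (hB₁ : B₁.PosSemidef) (x : n → ℂ) :
    a * parallelSumForm A₀ B₀ x + b * parallelSumForm A₁ B₁ x ≤
      parallelSumForm (a • A₀ + b • A₁) (a • B₀ + b • B₁) x :=
  le_ciInf fun u => by
    have h₀ := ciInf_le (bddBelow_parallelSumForm hA₀ hB₀ x) u
    have h₁ := ciInf_le (bddBelow_parallelSumForm hA₁ hB₁ x) u
    simp only [parallelSumForm, hermForm_add, hermForm_smul]
    nlinarith [mul_le_mul_of_nonneg_left h₀ ha, mul_le_mul_of_nonneg_left h₁ hb]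

theorem parallelSumForm_congr_diagonal [DecidableEq n] {T : Matrix n n ℂ} (hT : IsUnit T)
    {a : n → ℝ} (ha : 0 ≤ a) (x : n → ℂ) :
    parallelSumForm (T * diagonal (fun i => (a i : ℂ)) * Tᴴ) (T * Tᴴ) x =
      ∑ i, a i * Complex.normSq ((Tᴴ *ᵥ x) i) / (1 + a i) := by
  have hform : ∀ w, hermForm (T * Tᴴ) w = ∑ i, Complex.normSq ((Tᴴ *ᵥ w) i) := fun w => by
    simpa using hermForm_mul_diagonal_mul_conjTranspose T 1 w
  refine IsLeast.csInf_eq ⟨?_, ?_⟩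
  · set v : n → ℂ := fun i => (1 + a i : ℂ)⁻¹ * (Tᴴ *ᵥ x) i
    have hT' : IsUnit Tᴴ := hT.star
    have hv : Tᴴ *ᵥ ((Tᴴ)⁻¹ *ᵥ v) = v := by
      rw [mulVec_mulVec, mul_nonsing_inv _ ((isUnit_iff_isUnit_det _).mp hT'), one_mulVec]
    refine ⟨(Tᴴ)⁻¹ *ᵥ v, ?_⟩
    simp only [hermForm_mul_diagonal_mul_conjTranspose, hform, mulVec_sub, hv,
      ← Finset.sum_add_distrib]
    exact Finset.sum_congr rfl fun i _ => (Complex.mul_normSq_div_eq (ha i) _).symm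
  · rintro _ ⟨u, rfl⟩
    simp only [hermForm_mul_diagonal_mul_conjTranspose, hform, mulVec_sub,
      ← Finset.sum_add_distrib]
    exact Finset.sum_le_sum fun i _ => Complex.mul_normSq_div_le (ha i) _ _

variable [DecidableEq n]

lemma IsHermitian.rpowH_eq {A : Matrix n n ℂ} (hA : A.IsHermitian) (r : ℝ) :
    A.rpowH r = (hA.eigenvectorUnitary : Matrix n n ℂ) *
      diagonal (fun i => ((hA.eigenvalues i ^ r : ℝ) : ℂ)) *
      star (hA.eigenvectorUnitary : Matrix n n ℂ) :=
  dif_pos hA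

lemma isHermitian_rpowH (A : Matrix n n ℂ) (r : ℝ) : (A.rpowH r).IsHermitian := by
  unfold rpowH
  split
  · exact isHermitian_mul_mul_conjTranspose _ (isHermitian_diagonal_of_self_adjoint _
      (funext fun i => Complex.conj_ofReal _))
  · exact isHermitian_zero

lemma IsHermitian.rpowH_zero {A : Matrix n n ℂ} (hA : A.IsHermitian) : A.rpowH 0 = 1 := by
  simp [hA.rpowH_eq]

lemma IsHermitian.rpowH_one {A : Matrix n n ℂ} (hA : A.IsHermitian) : A.rpowH 1 = A := by
  conv_rhs => rw [hA.spectral_theorem, Unitary.conjStarAlgAut_apply]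
  simp only [hA.rpowH_eq, Real.rpow_one]
  rfl

lemma PosDef.rpowH_mul_rpowH {S : Matrix n n ℂ} (hS : S.PosDef) (r s : ℝ) :
    S.rpowH r * S.rpowH s = S.rpowH (r + s) := by
  simp only [hS.isHermitian.rpowH_eq, mul_assoc, ← mul_assoc (star _) (_ : Matrix n n ℂ),
    Unitary.coe_star_mul_self, one_mul]
  simp only [← mul_assoc, diagonal_mul_diagonal, ← Complex.ofReal_mul,
    ← Real.rpow_add (hS.eigenvalues_pos _)]

lemma PosSemidef.exists_rpowH_eq {X : Matrix n n ℂ} (hX : X.PosSemidef) :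
    ∃ (U : unitaryGroup n ℂ) (d : n → ℝ), 0 ≤ d ∧
      ∀ β, X.rpowH β =
        U * diagonal (fun i => ((d i ^ β : ℝ) : ℂ)) * star (U : Matrix n n ℂ) :=
  ⟨_, _, hX.eigenvalues_nonneg, hX.isHermitian.rpowH_eq⟩

theorem PosDef.exists_congr_diagonal {S A : Matrix n n ℂ} (hS : S.PosDef) (hA : A.PosSemidef) :
    ∃ (T : Matrix n n ℂ) (d : n → ℝ), IsUnit T ∧ 0 ≤ d ∧ S = T * Tᴴ ∧
      A = T * diagonal (fun i => (d i : ℂ)) * Tᴴ ∧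
      ∀ β, gmean β S A = T * diagonal (fun i => ((d i ^ β : ℝ) : ℂ)) * Tᴴ := by
  set h := S.rpowH (1/2)
  set g := S.rpowH (-(1/2))
  have hh : hᴴ = h := isHermitian_rpowH S _
  have hgh : g * h = 1 := by
    rw [hS.rpowH_mul_rpowH]; norm_num [hS.isHermitian.rpowH_zero]
  have hhg : h * g = 1 := by
    rw [hS.rpowH_mul_rpowH]; norm_num [hS.isHermitian.rpowH_zero]
  have hhh : h * h = S := by
    rw [hS.rpowH_mul_rpowH]; norm_num [hS.isHermitian.rpowH_one]
  have hX : (g * A * g).PosSemidef := by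
    have := hA.conjTranspose_mul_mul_same g
    rwa [(isHermitian_rpowH S _).eq] at this
  obtain ⟨U, d, hd, hXβ⟩ := hX.exists_rpowH_eq
  have hspec : g * A * g = U * diagonal (fun i => (d i : ℂ)) * star (U : Matrix n n ℂ) := by
    simpa only [Real.rpow_one] using hX.isHermitian.rpowH_one.symm.trans (hXβ 1)
  have hThT : (h * (U : Matrix n n ℂ))ᴴ = star (U : Matrix n n ℂ) * h := by
    rw [conjTranspose_mul, hh]; rfl
  refine ⟨h * (U : Matrix n n ℂ), d, ?_, hd, ?_, ?_, fun β => ?_⟩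
  · exact IsUnit.mul ⟨⟨h, g, hhg, hgh⟩, rfl⟩ Unitary.isUnit_coe
  · rw [hThT, mul_assoc, ← mul_assoc (U : Matrix n n ℂ), Unitary.mul_star_self_of_mem U.2,
      one_mul, hhh]
  · calc A = (h * g) * A * (g * h) := by rw [hhg, hgh, one_mul, mul_one]
      _ = h * (g * A * g) * h := by simp only [mul_assoc]
      _ = _ := by rw [hspec, hThT]; simp only [mul_assoc]
  · rw [hThT, gmean, hXβ]
    simp only [mul_assoc]
    rfl

lemma isHermitian_gmean (β : ℝ) (S A : Matrix n n ℂ) : (gmean β S A).IsHermitian := by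
  have h := isHermitian_conjTranspose_mul_mul (S.rpowH (1/2))
    (isHermitian_rpowH (S.rpowH (-(1/2)) * A * S.rpowH (-(1/2))) β)
  rwa [(isHermitian_rpowH S _).eq] at h

theorem PosDef.integral_parallelSumForm {β : ℝ} (hβ : β ∈ Ioo 0 1) {S A : Matrix n n ℂ}
    (hS : S.PosDef) (hA : A.PosSemidef) (x : n → ℂ) :
    IntegrableOn (fun t => t ^ (β - 1) * parallelSumForm (t⁻¹ • A) S x) (Ioi 0) ∧
      ∫ t in Ioi 0, t ^ (β - 1) * parallelSumForm (t⁻¹ • A) S x =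
        (∫ t in Ioi 0, Real.rpowIntegrand₀₁ β t 1) * hermForm (gmean β S A) x := by
  obtain ⟨T, d, hT, hd, rfl, hAT, hG⟩ := hS.exists_congr_diagonal hA
  set y := Tᴴ *ᵥ x
  have heq : EqOn (fun t => t ^ (β - 1) * parallelSumForm (t⁻¹ • A) (T * Tᴴ) x)
      (fun t => ∑ i, Complex.normSq (y i) * Real.rpowIntegrand₀₁ β t (d i)) (Ioi 0) := by
    intro t (ht : 0 < t)
    have hsmul : t⁻¹ • A = T * diagonal (fun i => ((t⁻¹ * d i : ℝ) : ℂ)) * Tᴴ := by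
      rw [hAT, ← Matrix.smul_mul, ← Matrix.mul_smul, ← diagonal_smul]
      congr; ext; simp [Complex.real_smul]
    dsimp only
    rw [hsmul, parallelSumForm_congr_diagonal hT (a := fun i => t⁻¹ * d i)
      (fun i => mul_nonneg (inv_nonneg.mpr ht.le) (hd i)) x, Finset.mul_sum]
    refine Finset.sum_congr rfl fun i _ => ?_
    rw [Real.rpowIntegrand₀₁_eq_pow_div hβ ht.le (hd i)]
    field_simp
    rfl
  have hint : ∀ i, IntegrableOn
      (fun t => Complex.normSq (y i) * Real.rpowIntegrand₀₁ β t (d i)) (Ioi 0) :=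
    fun i => (Real.integrableOn_rpowIntegrand₀₁_Ioi hβ (hd i)).const_mul _
  refine ⟨(integrableOn_congr_fun heq measurableSet_Ioi).mpr
    (integrable_finsetSum _ fun i _ => hint i), ?_⟩
  rw [setIntegral_congr_fun measurableSet_Ioi heq, integral_finsetSum _ fun i _ => hint i, hG,
    hermForm_mul_diagonal_mul_conjTranspose, Finset.mul_sum]
  refine Finset.sum_congr rfl fun i _ => ?_
  rw [integral_const_mul, Real.integral_rpowIntegrand₀₁_eq_rpow_mul_const hβ (hd i)]
  ring

theorem gmean_concave {β t : ℝ} (hβ : β ∈ Ioo 0 1) (ht₀ : 0 ≤ t) (ht₁ : t ≤ 1)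
    {S₀ S₁ A₀ A₁ : Matrix n n ℂ} (hS₀ : S₀.PosDef) (hS₁ : S₁.PosDef)
    (hA₀ : A₀.PosSemidef) (hA₁ : A₁.PosSemidef) :
    (gmean β ((1 - t) • S₀ + t • S₁) ((1 - t) • A₀ + t • A₁) -
      ((1 - t) • gmean β S₀ A₀ + t • gmean β S₁ A₁)).PosSemidef := by
  have ht : 0 ≤ 1 - t := by linarith
  have hS := PosDef.smul_add_smul ht ht₀ (by linarith) hS₀ hS₁
  have hA := (hA₀.smul ht).add (hA₁.smul ht₀)
  refine ((isHermitian_gmean β _ _).sub (((isHermitian_gmean β _ _).smul (.all _)).add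
    ((isHermitian_gmean β _ _).smul (.all _)))).posSemidef_of_hermForm_nonneg fun x => ?_
  obtain ⟨hint, heq⟩ := hS.integral_parallelSumForm hβ hA x
  obtain ⟨hint₀, heq₀⟩ := hS₀.integral_parallelSumForm hβ hA₀ x
  obtain ⟨hint₁, heq₁⟩ := hS₁.integral_parallelSumForm hβ hA₁ x
  have hC := Real.integral_rpowIntegrand₀₁_one_pos hβ
  have hmono : ∀ s ∈ Ioi (0 : ℝ),
      (1 - t) * (s ^ (β - 1) * parallelSumForm (s⁻¹ • A₀) S₀ x) +
        t * (s ^ (β - 1) * parallelSumForm (s⁻¹ • A₁) S₁ x) ≤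
      s ^ (β - 1) *
        parallelSumForm (s⁻¹ • ((1 - t) • A₀ + t • A₁)) ((1 - t) • S₀ + t • S₁) x := by
    intro s (hs : 0 < s)
    have hconc := smul_parallelSumForm_add_smul_le ht ht₀ (hA₀.smul (inv_nonneg.mpr hs.le))
      hS₀.posSemidef (hA₁.smul (inv_nonneg.mpr hs.le)) hS₁.posSemidef x
    rw [show s⁻¹ • ((1 - t) • A₀ + t • A₁) = (1 - t) • s⁻¹ • A₀ + t • s⁻¹ • A₁ by module]
    nlinarith [mul_le_mul_of_nonneg_left hconc (Real.rpow_nonneg hs.le (β - 1))]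
  have hle := setIntegral_mono_on ((hint₀.const_mul (1 - t)).add (hint₁.const_mul t)) hint
    measurableSet_Ioi hmono
  rw [integral_add' (hint₀.const_mul _) (hint₁.const_mul _), integral_const_mul,
    integral_const_mul, heq, heq₀, heq₁] at hle
  simp only [hermForm_sub, hermForm_add, hermForm_smul]
  nlinarith

lemma mul_diagonal_const_mul_conjTranspose (T : Matrix n n ℂ) (c : ℝ) :
    T * diagonal (fun _ => (c : ℂ)) * Tᴴ = c • (T * Tᴴ) := by
  rw [← smul_one_eq_diagonal, Matrix.mul_smul, mul_one, Matrix.smul_mul, Complex.coe_smul]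

lemma PosDef.exists_sub_posSemidef {σ ρ : Matrix n n ℂ} (hσ : σ.PosDef)
    (hρ : ρ.PosSemidef) :
    ∃ K : ℝ, 0 ≤ K ∧ (K • σ - ρ).PosSemidef := by
  obtain ⟨T, d, -, hd, rfl, rfl, -⟩ := hσ.exists_congr_diagonal hρ
  refine ⟨∑ i, d i, Finset.sum_nonneg fun i _ => hd i, ?_⟩
  have hdiag : (diagonal fun i => (((∑ j, d j) - d i : ℝ) : ℂ)).PosSemidef :=
    PosSemidef.diagonal fun i => Complex.zero_le_real.mpr
      (sub_nonneg.mpr (Finset.single_le_sum (fun j _ => hd j) (Finset.mem_univ i)))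
  convert hdiag.mul_mul_conjTranspose_same T using 1
  simp only [Complex.ofReal_sub, ← diagonal_sub, Matrix.mul_sub, Matrix.sub_mul,
    mul_diagonal_const_mul_conjTranspose]

lemma PosDef.gmean_smul_self {σ : Matrix n n ℂ} (hσ : σ.PosDef) {c : ℝ} (hc : 0 ≤ c)
    (β : ℝ) :
    gmean β σ (c • σ) = c ^ β • σ := by
  obtain ⟨T, d, hT, -, hσT, hA, hG⟩ := hσ.exists_congr_diagonal (hσ.posSemidef.smul hc)
  have hdiag : diagonal (fun i => (d i : ℂ)) = diagonal fun _ => (c : ℂ) := by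
    refine hT.mul_left_cancel (hT.star.mul_right_cancel ?_)
    change _ * _ * Tᴴ = _ * _ * Tᴴ
    rw [← hA, hσT, mul_diagonal_const_mul_conjTranspose]
  have hd : ∀ i, d i = c := fun i => by
    simpa using congrFun (diagonal_injective hdiag) i
  rw [hG, hσT]
  simp only [hd, mul_diagonal_const_mul_conjTranspose]

end Matrix

section QSharp

variable {n : Type*} [Fintype n] [DecidableEq n]

def qSharpSet (α : ℝ) (ρ σ : Matrix n n ℂ) : Set ℝ :=
  {t : ℝ | ∃ A : Matrix n n ℂ, A.PosSemidef ∧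
    (Matrix.gmean (1/α) σ A - ρ).PosSemidef ∧ t = A.trace.re}

lemma bddBelow_qSharpSet (α : ℝ) (ρ σ : Matrix n n ℂ) : BddBelow (qSharpSet α ρ σ) := by
  refine ⟨0, ?_⟩
  rintro _ ⟨A, hA, -, rfl⟩
  exact (RCLike.nonneg_iff.mp hA.trace_nonneg).1

lemma qSharpSet_nonempty {α : ℝ} (hα : α ≠ 0) {ρ σ : Matrix n n ℂ} (hρ : ρ.PosSemidef)
    (hσ : σ.PosDef) : (qSharpSet α ρ σ).Nonempty := by
  obtain ⟨K, hK, hKσ⟩ := hσ.exists_sub_posSemidef hρ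
  refine ⟨_, K ^ α • σ, hσ.posSemidef.smul (Real.rpow_nonneg hK α), ?_, rfl⟩
  rwa [hσ.gmean_smul_self (Real.rpow_nonneg hK α), one_div, Real.rpow_rpow_inv hK hα]

lemma smul_qSharpSet_add_smul_subset {α lam : ℝ} (hα : 1 < α) (hl0 : 0 ≤ lam)
    (hl1 : lam ≤ 1) {ρ₀ ρ₁ σ₀ σ₁ : Matrix n n ℂ} (hσ₀ : σ₀.PosDef) (hσ₁ : σ₁.PosDef) :
    (1 - lam) • qSharpSet α ρ₀ σ₀ + lam • qSharpSet α ρ₁ σ₁ ⊆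
      qSharpSet α ((1 - lam) • ρ₀ + lam • ρ₁) ((1 - lam) • σ₀ + lam • σ₁) := by
  rintro _ ⟨_, ⟨_, ⟨A₀, hA₀, hf₀, rfl⟩, rfl⟩, _,
    ⟨_, ⟨A₁, hA₁, hf₁, rfl⟩, rfl⟩, rfl⟩
  have hl : 0 ≤ 1 - lam := by linarith
  have hβ : 1 / α ∈ Ioo 0 1 := ⟨by positivity, (div_lt_one (by linarith)).mpr hα⟩
  refine ⟨(1 - lam) • A₀ + lam • A₁, (hA₀.smul hl).add (hA₁.smul hl0), ?_, by simp⟩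
  convert (Matrix.gmean_concave hβ hl0 hl1 hσ₀ hσ₁ hA₀ hA₁).add
    ((hf₀.smul hl).add (hf₁.smul hl0)) using 1
  module

end QSharp

/-- joint convexity of Q^#_α. -/
theorem QSharp_jointly_convex
    {n : Type*} [Fintype n] [DecidableEq n]
    (α : ℝ) (hα : 1 < α) (lam : ℝ) (hl0 : 0 ≤ lam) (hl1 : lam ≤ 1)
    (ρ₀ ρ₁ σ₀ σ₁ : Matrix n n ℂ)
    (hρ₀ : ρ₀.PosSemidef) (hρ₁ : ρ₁.PosSemidef)
    (hσ₀ : σ₀.PosDef) (hσ₁ : σ₁.PosDef) :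
    QSharp α ((1 - lam) • ρ₀ + lam • ρ₁) ((1 - lam) • σ₀ + lam • σ₁)
      ≤ (1 - lam) * QSharp α ρ₀ σ₀ + lam * QSharp α ρ₁ σ₁ := by
  have hl : 0 ≤ 1 - lam := by linarith
  have hne₀ := qSharpSet_nonempty (zero_lt_one.trans hα).ne' hρ₀ hσ₀
  have hne₁ := qSharpSet_nonempty (zero_lt_one.trans hα).ne' hρ₁ hσ₁
  calc QSharp α ((1 - lam) • ρ₀ + lam • ρ₁) ((1 - lam) • σ₀ + lam • σ₁)
      ≤ sInf ((1 - lam) • qSharpSet α ρ₀ σ₀ + lam • qSharpSet α ρ₁ σ₁) :=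
        csInf_le_csInf (bddBelow_qSharpSet _ _ _) (hne₀.smul_set.add hne₁.smul_set)
          (smul_qSharpSet_add_smul_subset hα hl0 hl1 hσ₀ hσ₁)
    _ = (1 - lam) * QSharp α ρ₀ σ₀ + lam * QSharp α ρ₁ σ₁ := by
        rw [csInf_add hne₀.smul_set ((bddBelow_qSharpSet _ _ _).smul_of_nonneg hl)
          hne₁.smul_set ((bddBelow_qSharpSet _ _ _).smul_of_nonneg hl0),
          Real.sInf_smul_of_nonneg hl, Real.sInf_smul_of_nonneg hl0]
        rfl
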